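/- arXiv:1807.03726 — 6 statements merged into one kernel-verified Lean document; each statement's English description precedes it below -/
import Mathlib

section
/- If α is a complex root of p(z) = z^4 - z^3 - z^2 - z + 1 that is not real, then |α| = 1. -/
/-!
The polynomial is reciprocal: for `z ≠ 0`, dividing by `z ^ 2` turns `p(z) = 0` into
`w ^ 2 - w - 3 = 0` for `w = z + z⁻¹`. This quadratic has positive discriminant, so `w` is real.
Since `Im (z + z⁻¹) = Im z * (1 - 1 / |z| ^ 2)`, a non-real `z` with `z + z⁻¹` real lies on the
unit circle.
-/

namespace Complex

theorem im_eq_zero_of_sq_add_mul_add_eq_zero {w : ℂ} {b c : ℝ} (hdisc : 4 * c ≤ b ^ 2)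
    (hw : w ^ 2 + b * w + c = 0) : w.im = 0 := by
  have hre : w.re ^ 2 - w.im ^ 2 + b * w.re + c = 0 := by
    simpa [sq] using congrArg re hw
  have him : w.im * (2 * w.re + b) = 0 := by
    linear_combination (by simpa [sq] using congrArg im hw : _ = _)
  rcases mul_eq_zero.mp him with h | h
  · exact h
  · have hre' : w.re = -b / 2 := by linarith
    rw [hre'] at hre
    nlinarith [sq_nonneg w.im]

theorem norm_eq_one_of_im_add_inv_eq_zero {z : ℂ} (hz : z.im ≠ 0)
    (h : (z + z⁻¹).im = 0) : ‖z‖ = 1 := by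
  have hnormSq : normSq z ≠ 0 := fun h0 => hz (by simp [normSq_eq_zero.mp h0])
  have hprod : z.im * (normSq z - 1) = 0 := by
    simp only [add_im, inv_im] at h
    field_simp at h
    linear_combination h
  have hsq : normSq z = 1 := by
    linarith [(mul_eq_zero.mp hprod).resolve_left hz]
  rw [norm_def, hsq, Real.sqrt_one]

end Complex

theorem quartic_eq_sq_mul_quadratic_add_inv {z : ℂ} (hz : z ≠ 0) :
    z ^ 4 - z ^ 3 - z ^ 2 - z + 1 = z ^ 2 * ((z + z⁻¹) ^ 2 - (z + z⁻¹) - 3) := by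
  field_simp
  ring

theorem stmt_5 (α : ℂ) (hroot : α ^ 4 - α ^ 3 - α ^ 2 - α + 1 = 0) (him : α.im ≠ 0) :
    ‖α‖ = 1 := by
  have hα : α ≠ 0 := by
    rintro rfl
    norm_num at hroot
  have hw : (α + α⁻¹) ^ 2 + ((-1 : ℝ) : ℂ) * (α + α⁻¹) + ((-3 : ℝ) : ℂ) = 0 := by
    rw [quartic_eq_sq_mul_quadratic_add_inv hα] at hroot
    push_cast
    linear_combination (mul_eq_zero.mp hroot).resolve_left (pow_ne_zero 2 hα)
  exact Complex.norm_eq_one_of_im_add_inv_eq_zero him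
    (Complex.im_eq_zero_of_sq_add_mul_add_eq_zero (by norm_num) hw)
end

section
/- If α is a non-real complex root of z^4 - z^3 - z^2 - z + 1, then the powers α^m for m ∈ ℤ are pairwise distinct. -/
set_option maxHeartbeats 1000000

/-- Integer coordinates of `x^n + x⁻¹^n` in the basis `1, b` where `b = x + x⁻¹`
satisfies `b*b = b + 3`. -/
def stmt7P : ℕ → ℤ × ℤ
  | 0 => (2, 0)
  | 1 => (0, 1)
  | n + 2 => (3 * (stmt7P (n+1)).2 - (stmt7P n).1,
              (stmt7P (n+1)).1 + (stmt7P (n+1)).2 - (stmt7P n).2)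

theorem stmt7_key {K : Type*} [Field K] (x b : K) (hx : x ≠ 0) (hb : x + x⁻¹ = b)
    (hb2 : b * b = b + 3) :
    ∀ n : ℕ, x ^ n + x⁻¹ ^ n = ((stmt7P n).1 : K) + ((stmt7P n).2 : K) * b := by
  have hinv : x * x⁻¹ = 1 := mul_inv_cancel₀ hx
  have H : ∀ n : ℕ,
      (x ^ n + x⁻¹ ^ n = ((stmt7P n).1 : K) + ((stmt7P n).2 : K) * b) ∧
      (x ^ (n+1) + x⁻¹ ^ (n+1) = ((stmt7P (n+1)).1 : K) + ((stmt7P (n+1)).2 : K) * b) := by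
    intro n
    induction n with
    | zero =>
      constructor
      · norm_num [stmt7P]
      · simp [stmt7P, hb.symm]
    | succ n ih =>
      obtain ⟨ih1, ih2⟩ := ih
      refine ⟨ih2, ?_⟩
      have h3 : x ^ (n+2) + x⁻¹ ^ (n+2)
          = b * (x ^ (n+1) + x⁻¹ ^ (n+1)) - (x ^ n + x⁻¹ ^ n) := by
        rw [← hb, pow_succ, pow_succ, pow_succ, pow_succ]
        linear_combination (-(x ^ n) - x⁻¹ ^ n) * hinv
      show x ^ (n+2) + x⁻¹ ^ (n+2) = ((stmt7P (n+2)).1 : K) + ((stmt7P (n+2)).2 : K) * b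
      simp only [stmt7P]
      push_cast
      linear_combination h3 + b * ih2 - ih1 + ((stmt7P (n+1)).2 : K) * hb2
  exact fun n => (H n).1

theorem stmt_7 (α : ℂ) (hroot : α ^ 4 - α ^ 3 - α ^ 2 - α + 1 = 0) (him : α.im ≠ 0) :
    Function.Injective (fun m : ℤ => α ^ m) := by
  have hα0 : α ≠ 0 := by
    intro h; rw [h] at hroot; norm_num at hroot
  have hA : α * α⁻¹ = 1 := mul_inv_cancel₀ hα0
  -- β = α + α⁻¹ satisfies β² = β + 3
  set β : ℂ := α + α⁻¹ with hβ
  have hb2 : β * β = β + 3 := by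
    rw [hβ]
    linear_combination (α⁻¹ * α⁻¹) * hroot
      + ((1 + α - α ^ 2) * (α * α⁻¹ + 1) + α⁻¹ + 2) * hA
  -- β is real, equal to (1 - √13)/2
  have h13 : ((Real.sqrt 13 : ℝ) : ℂ) ^ 2 = 13 := by
    norm_cast
    rw [Real.sq_sqrt] <;> norm_num
  have hfac : (2*β - 1 - (Real.sqrt 13 : ℝ)) * (2*β - 1 + (Real.sqrt 13 : ℝ)) = 0 := by
    linear_combination 4 * hb2 - h13
  have hquad : α ^ 2 + 1 = β * α := by
    rw [hβ]
    linear_combination -hA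
  have hsq3 : Real.sqrt 13 > 3 := by
    nlinarith [Real.sq_sqrt (by norm_num : (13:ℝ) ≥ 0), Real.sqrt_nonneg 13]
  have himsq : 0 < α.im ^ 2 := pow_two_pos_of_ne_zero him
  have hβval : β = (((1 - Real.sqrt 13)/2 : ℝ) : ℂ) := by
    rcases mul_eq_zero.mp hfac with h | h
    · -- β = (1 + √13)/2 : impossible since |2 re α| < 2
      exfalso
      set s : ℝ := (1 + Real.sqrt 13)/2 with hs
      have hβeq : β = (s : ℂ) := by
        rw [hs]; push_cast; linear_combination h / 2
      rw [hβeq] at hquad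
      have e1 := congrArg Complex.im hquad
      have e2 := congrArg Complex.re hquad
      simp only [Complex.add_im, Complex.add_re, Complex.one_im, Complex.one_re,
        Complex.mul_im, Complex.mul_re, Complex.ofReal_re, Complex.ofReal_im,
        pow_two, zero_mul, mul_zero, add_zero, zero_add, sub_zero] at e1 e2
      have h' : (2 * α.re - s) * α.im = 0 := by linear_combination e1
      have ht : s = 2 * α.re := by
        rcases mul_eq_zero.mp h' with h'' | h''
        · linarith
        · exact absurd h'' him
      have huv : α.re ^ 2 + α.im ^ 2 = 1 := by nlinarith [e2, ht]
      nlinarith [hsq3, huv, ht, himsq, hs]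
    · push_cast; linear_combination h / 2
  -- injectivity
  intro m n hmn
  simp only at hmn
  by_contra hne
  -- get N ≥ 1 with α ^ N = 1
  have hk : α ^ (m - n) = 1 := by
    rw [zpow_sub₀ hα0, hmn, div_self (zpow_ne_zero _ hα0)]
  set k := m - n with hkdef
  have hk0 : k ≠ 0 := sub_ne_zero.mpr hne
  set N := k.natAbs with hNdef
  have hN1 : 1 ≤ N := Int.natAbs_pos.mpr hk0
  have hαN : α ^ N = 1 := by
    rcases Int.natAbs_eq k with h | h
    · rw [← zpow_natCast, hNdef, ← h, hk]
    · rw [← zpow_natCast]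
      have : ((N : ℤ)) = -k := by omega
      rw [this, zpow_neg, hk, inv_one]
  -- complex side: p N + q N * β = 2
  have hcomplex := stmt7_key α β hα0 hβ.symm hb2 N
  rw [hαN, inv_pow, hαN, inv_one, hβval] at hcomplex
  have hreal : ((stmt7P N).1 : ℝ) + ((stmt7P N).2 : ℝ) * ((1 - Real.sqrt 13)/2) = 2 := by
    have h2 : ((((stmt7P N).1 : ℝ) + ((stmt7P N).2 : ℝ) * ((1 - Real.sqrt 13)/2) : ℝ) : ℂ)
        = ((2:ℝ) : ℂ) := by
      push_cast
      push_cast at hcomplex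
      linear_combination -hcomplex
    exact_mod_cast h2
  -- q N = 0 by irrationality of √13
  have hirr : Irrational (Real.sqrt 13) := Nat.Prime.irrational_sqrt (by norm_num)
  have hq0 : (stmt7P N).2 = 0 := by
    by_contra hq
    apply hirr
    refine ⟨((2 * (stmt7P N).1 + (stmt7P N).2 - 4 : ℤ) : ℚ) / ((stmt7P N).2 : ℤ), ?_⟩
    have hqR : ((stmt7P N).2 : ℝ) ≠ 0 := Int.cast_ne_zero.mpr hq
    push_cast
    rw [div_eq_iff hqR]
    linear_combination 2 * hreal
  have hp2 : ((stmt7P N).1 : ℝ) = 2 := by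
    rw [hq0] at hreal; push_cast at hreal; linarith
  -- real side: find real root r > 1 of the quartic
  have hIVT : ∃ r ∈ Set.Icc (1:ℝ) 2, r ^ 4 - r ^ 3 - r ^ 2 - r + 1 = 0 := by
    have hcont : ContinuousOn (fun r : ℝ => r ^ 4 - r ^ 3 - r ^ 2 - r + 1) (Set.Icc 1 2) :=
      (by continuity : Continuous fun r : ℝ => r ^ 4 - r ^ 3 - r ^ 2 - r + 1).continuousOn
    have h0 : (0:ℝ) ∈ Set.Icc ((1:ℝ)^4 - 1^3 - 1^2 - 1 + 1) ((2:ℝ)^4 - 2^3 - 2^2 - 2 + 1) := by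
      norm_num
    obtain ⟨r, hr, hr0⟩ := intermediate_value_Icc (by norm_num : (1:ℝ) ≤ 2) hcont h0
    exact ⟨r, hr, hr0⟩
  obtain ⟨r, hrI, hrroot⟩ := hIVT
  have hr1 : 1 < r := by
    rcases lt_or_eq_of_le hrI.1 with h | h
    · exact h
    · exfalso; rw [← h] at hrroot; norm_num at hrroot
  have hr0 : r ≠ 0 := ne_of_gt (by linarith : (0:ℝ) < r)
  have hAr : r * r⁻¹ = 1 := mul_inv_cancel₀ hr0
  set γ : ℝ := r + r⁻¹ with hγ
  have hγ2 : γ * γ = γ + 3 := by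
    rw [hγ]
    linear_combination (r⁻¹ * r⁻¹) * hrroot
      + ((1 + r - r ^ 2) * (r * r⁻¹ + 1) + r⁻¹ + 2) * hAr
  have hRside := stmt7_key r γ hr0 hγ.symm hγ2 N
  rw [hq0, hp2] at hRside
  push_cast at hRside
  -- but r^N + r⁻ᴺ > 2 since r > 1
  have hrN : 1 < r ^ N := one_lt_pow₀ hr1 (by omega)
  rw [inv_pow] at hRside
  have hgt : r ^ N + (r ^ N)⁻¹ > 2 := by
    have h0 : (0:ℝ) < r ^ N := pow_pos (by linarith) N
    rw [gt_iff_lt, ← sub_pos]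
    have heq : r ^ N + (r ^ N)⁻¹ - 2 = (r ^ N - 1)^2 / r ^ N := by field_simp; ring
    rw [heq]
    exact div_pos (by nlinarith [hrN]) h0
  simp only [Int.cast_zero, zero_mul, add_zero] at hRside
  linarith [hRside]
end

section
/- Let v1, v2, v3 be unit vectors in ℝ² that are linearly independent over ℚ, with inner products γ = (v1,v2), α = (v2,v3), β = (v3,v1). Then α ≠ βγ, β ≠ αγ, and γ ≠ αβ. -/
/-!
Three vectors in the plane are linearly dependent over ℝ, so their Gram determinant vanishes; for
unit vectors it reads `1 + 2αβγ - α² - β² - γ² = (1 - β²)(1 - γ²) - (α - βγ)² = 0`. Independence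
over ℚ rules out `vᵢ = ±vⱼ`, so `|α|, |β|, |γ| < 1` by Cauchy–Schwarz, and `α = βγ` would force
`(1 - β²)(1 - γ²) = 0`. The other two cases are the same by symmetry.
-/

open RealInnerProductSpace Matrix Module

theorem det_gram_eq_zero_of_finrank_lt {𝕜 E ι : Type*} [RCLike 𝕜] [NormedAddCommGroup E]
    [InnerProductSpace 𝕜 E] [FiniteDimensional 𝕜 E] [Fintype ι] [DecidableEq ι] (v : ι → E)
    (h : finrank 𝕜 E < Fintype.card ι) : (gram 𝕜 v).det = 0 := by
  by_contra hdet
  exact h.not_ge (det_gram_ne_zero_iff_linearIndependent.mp hdet).fintype_card_le_finrank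

theorem det_gram_three_of_norm_eq_one {F : Type*} [NormedAddCommGroup F] [InnerProductSpace ℝ F]
    {x y z : F} (hx : ‖x‖ = 1) (hy : ‖y‖ = 1) (hz : ‖z‖ = 1) :
    (gram ℝ ![x, y, z]).det =
      1 + 2 * ⟪y, z⟫ * ⟪z, x⟫ * ⟪x, y⟫ - ⟪y, z⟫ ^ 2 - ⟪z, x⟫ ^ 2 - ⟪x, y⟫ ^ 2 := by
  simp only [det_fin_three, gram_apply, Matrix.cons_val, real_inner_self_eq_norm_sq, hx, hy, hz]
  rw [real_inner_comm x y, real_inner_comm y z, real_inner_comm x z]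
  ring

theorem abs_real_inner_lt_one_of_norm_eq_one {F : Type*} [NormedAddCommGroup F]
    [InnerProductSpace ℝ F] {x y : F} (hx : ‖x‖ = 1) (hy : ‖y‖ = 1) (hxy : x ≠ y) (hxy' : x ≠ -y) :
    |⟪x, y⟫| < 1 := by
  refine (by simpa [hx, hy] using abs_real_inner_le_norm x y : |⟪x, y⟫| ≤ 1).lt_of_ne fun h ↦ ?_
  rcases (abs_eq zero_le_one).mp h with h | h
  · exact hxy ((inner_eq_one_iff_of_norm_eq_one hx hy).mp h)
  · exact hxy' ((inner_eq_neg_one_iff_of_norm_eq_one hx hy).mp h)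

theorem LinearIndependent.ne_neg {ι R M : Type*} [Ring R] [Nontrivial R] [AddCommGroup M]
    [Module R M] {v : ι → M} (hv : LinearIndependent R v) {i j : ι} (hij : i ≠ j) :
    v i ≠ -v j := by
  classical
  intro h
  refine one_ne_zero (linearIndependent_iff'.mp hv {i, j} (fun _ ↦ (1 : R)) ?_ i (by simp))
  simp [Finset.sum_pair hij, h]

theorem abs_real_inner_lt_one_of_linearIndependent {ι R F : Type*} [Ring R] [Nontrivial R]
    [NormedAddCommGroup F] [InnerProductSpace ℝ F] [Module R F] {v : ι → F}
    (hv : LinearIndependent R v) (hnorm : ∀ i, ‖v i‖ = 1) {i j : ι} (hij : i ≠ j) :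
    |⟪v i, v j⟫| < 1 :=
  abs_real_inner_lt_one_of_norm_eq_one (hnorm i) (hnorm j) (hv.injective.ne hij) (hv.ne_neg hij)

theorem ne_mul_of_gram_eq_zero {α β γ : ℝ} (hD : 1 + 2 * α * β * γ - α ^ 2 - β ^ 2 - γ ^ 2 = 0)
    (hβ : |β| < 1) (hγ : |γ| < 1) : α ≠ β * γ := by
  rintro rfl
  have hβ' : 0 < 1 - β ^ 2 := sub_pos.mpr ((sq_lt_one_iff_abs_lt_one β).mpr hβ)
  have hγ' : 0 < 1 - γ ^ 2 := sub_pos.mpr ((sq_lt_one_iff_abs_lt_one γ).mpr hγ)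
  exact (mul_pos hβ' hγ').ne' (by linear_combination hD)

theorem stmt_12 (v₁ v₂ v₃ : EuclideanSpace ℝ (Fin 2))
    (h1 : ‖v₁‖ = 1) (h2 : ‖v₂‖ = 1) (h3 : ‖v₃‖ = 1)
    (hind : LinearIndependent ℚ ![v₁, v₂, v₃])
    (α β γ : ℝ) (hγ : inner ℝ v₁ v₂ = γ) (hα : inner ℝ v₂ v₃ = α) (hβ : inner ℝ v₃ v₁ = β) :
    α ≠ β * γ ∧ β ≠ α * γ ∧ γ ≠ α * β := by
  have hD : 1 + 2 * α * β * γ - α ^ 2 - β ^ 2 - γ ^ 2 = 0 := by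
    rw [← det_gram_eq_zero_of_finrank_lt (𝕜 := ℝ) ![v₁, v₂, v₃] (by simp),
      det_gram_three_of_norm_eq_one h1 h2 h3, hα, hβ, hγ]
  have hnorm : ∀ i, ‖![v₁, v₂, v₃] i‖ = 1 := by
    intro i
    fin_cases i <;> assumption
  have hαlt : |α| < 1 :=
    hα ▸ abs_real_inner_lt_one_of_linearIndependent hind hnorm (i := 1) (j := 2) (by decide)
  have hβlt : |β| < 1 :=
    hβ ▸ abs_real_inner_lt_one_of_linearIndependent hind hnorm (i := 2) (j := 0) (by decide)
  have hγlt : |γ| < 1 :=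
    hγ ▸ abs_real_inner_lt_one_of_linearIndependent hind hnorm (i := 0) (j := 1) (by decide)
  exact ⟨ne_mul_of_gram_eq_zero hD hβlt hγlt,
    ne_mul_of_gram_eq_zero (by linear_combination hD) hαlt hγlt,
    ne_mul_of_gram_eq_zero (by linear_combination hD) hαlt hβlt⟩
end

section
/- Let v1, v2, v3 be unit vectors in ℝ², linearly independent over ℚ, with γ=(v1,v2), α=(v2,v3), β=(v3,v1). Then v1/(α-βγ) + v2/(β-αγ) + v3/(γ-αβ) = 0. -/
/-!
Since `v₁, v₂` are independent and `ℝ²` is two-dimensional, `v₃ = a v₁ + b v₂`. Taking inner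
products with `v₁`, `v₂`, `v₃` gives `β = a + bγ`, `α = aγ + b` and `a² + b² + 2abγ = 1`, whence
`α - βγ = b(1 - γ²)`, `β - αγ = a(1 - γ²)` and `γ - αβ = -ab(1 - γ²)`; the claimed combination is
then `(ab(1 - γ²))⁻¹ (a v₁ + b v₂ - v₃) = 0`. Rational independence is what makes `a`, `b` and
`1 - γ²` nonzero: two unit vectors that are real multiples of each other differ by a sign.
-/

open RealInnerProductSpace Module

theorem LinearIndependent.pair_of_ne {ι R M : Type*} [Semiring R] [AddCommMonoid M] [Module R M]
    {f : ι → M} (h : LinearIndependent R f) {i j : ι} (hij : i ≠ j) :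
    LinearIndependent R ![f i, f j] := by
  have hinj : Function.Injective ![i, j] := by
    intro k l hkl
    fin_cases k <;> fin_cases l <;> simp_all [eq_comm]
  convert h.comp ![i, j] hinj using 1
  ext k
  fin_cases k <;> rfl

theorem LinearIndependent.real_of_rat_of_norm_eq_one {E : Type*} [NormedAddCommGroup E]
    [NormedSpace ℝ E] [Module ℚ E] {u w : E} (hu : ‖u‖ = 1) (hw : ‖w‖ = 1)
    (h : LinearIndependent ℚ ![u, w]) : LinearIndependent ℝ ![u, w] := by
  have hu₀ : u ≠ 0 := norm_ne_zero_iff.1 (by simp [hu])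
  rw [LinearIndependent.pair_iff' hu₀] at h ⊢
  intro a ha
  have habs : |a| = 1 := by simpa [norm_smul, hu, hw] using congrArg norm ha
  rcases abs_eq zero_le_one |>.1 habs with rfl | rfl
  · exact h 1 (by simpa using ha)
  · exact h (-1) (by simpa using ha)

theorem exists_smul_add_smul_eq_of_finrank_eq_two {K V : Type*} [Field K] [AddCommGroup V]
    [Module K V] (hV : finrank K V = 2) {u v : V} (h : LinearIndependent K ![u, v]) (w : V) :
    ∃ a b : K, a • u + b • v = w := by
  have hspan := h.span_eq_top_of_card_eq_finrank (by simp [hV])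
  rw [Matrix.range_cons, Matrix.range_cons, Matrix.range_empty, Set.union_empty,
    Set.singleton_union] at hspan
  exact Submodule.mem_span_pair.1 (hspan ▸ Submodule.mem_top)

section InnerProductSpace

variable {E : Type*} [NormedAddCommGroup E] [InnerProductSpace ℝ E]

theorem real_inner_sq_ne_one_of_linearIndependent {u v : E} (hu : ‖u‖ = 1) (hv : ‖v‖ = 1)
    (h : LinearIndependent ℝ ![u, v]) : ⟪u, v⟫ ^ 2 ≠ 1 := by
  have hu₀ : u ≠ 0 := norm_ne_zero_iff.1 (by simp [hu])
  rw [LinearIndependent.pair_iff' hu₀] at h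
  rw [Ne, sq_eq_one_iff, inner_eq_one_iff_of_norm_eq_one hu hv,
    inner_eq_neg_one_iff_of_norm_eq_one hu hv]
  rintro (huv | huv)
  · exact h 1 (by simp [huv])
  · exact h (-1) (by simp [huv])

theorem inv_smul_add_inv_smul_add_inv_smul_eq_zero {u v w : E} {a b α β γ : ℝ}
    (hu : ‖u‖ = 1) (hv : ‖v‖ = 1) (hw : ‖w‖ = 1) (hwuv : a • u + b • v = w)
    (ha : a ≠ 0) (hb : b ≠ 0) (hγ₁ : γ ^ 2 ≠ 1)
    (hγ : ⟪u, v⟫ = γ) (hα : ⟪v, w⟫ = α) (hβ : ⟪w, u⟫ = β) :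
    (α - β * γ)⁻¹ • u + (β - α * γ)⁻¹ • v + (γ - α * β)⁻¹ • w = 0 := by
  subst hwuv
  have huu : ⟪u, u⟫ = 1 := inner_self_eq_one_of_norm_eq_one hu
  have hvv : ⟪v, v⟫ = 1 := inner_self_eq_one_of_norm_eq_one hv
  have hvu : ⟪v, u⟫ = γ := real_inner_comm u v ▸ hγ
  have hβ' : β = a + b * γ := by
    rw [← hβ, inner_add_left, real_inner_smul_left, real_inner_smul_left, huu, hvu]; ring
  have hα' : α = a * γ + b := by
    rw [← hα, inner_add_right, real_inner_smul_right, real_inner_smul_right, hvv, hvu]; ring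
  have hnorm : a ^ 2 + b ^ 2 + 2 * a * b * γ = 1 := by
    have hww : ⟪_, _⟫ = (1 : ℝ) := inner_self_eq_one_of_norm_eq_one hw
    simp only [inner_add_left, inner_add_right, real_inner_smul_left, real_inner_smul_right,
      huu, hvv, hγ, hvu] at hww
    linear_combination hww
  have h₁ : α - β * γ = b * (1 - γ ^ 2) := by rw [hα', hβ']; ring
  have h₂ : β - α * γ = a * (1 - γ ^ 2) := by rw [hα', hβ']; ring
  have h₃ : γ - α * β = -(a * b * (1 - γ ^ 2)) := by
    rw [hα', hβ']; linear_combination (-γ) * hnorm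
  have hγ₁' : 1 - γ ^ 2 ≠ 0 := sub_ne_zero.2 hγ₁.symm
  rw [h₁, h₂, h₃]
  match_scalars <;> field_simp <;> ring

end InnerProductSpace

theorem stmt_13 (v₁ v₂ v₃ : EuclideanSpace ℝ (Fin 2))
    (h1 : ‖v₁‖ = 1) (h2 : ‖v₂‖ = 1) (h3 : ‖v₃‖ = 1)
    (hind : LinearIndependent ℚ ![v₁, v₂, v₃])
    (α β γ : ℝ) (hγ : inner ℝ v₁ v₂ = γ) (hα : inner ℝ v₂ v₃ = α) (hβ : inner ℝ v₃ v₁ = β) :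
    (α - β * γ)⁻¹ • v₁ + (β - α * γ)⁻¹ • v₂ + (γ - α * β)⁻¹ • v₃ = 0 := by
  have h12 : LinearIndependent ℝ ![v₁, v₂] :=
    (hind.pair_of_ne (i := 0) (j := 1) (by decide)).real_of_rat_of_norm_eq_one h1 h2
  have h31 : LinearIndependent ℝ ![v₃, v₁] :=
    (hind.pair_of_ne (i := 2) (j := 0) (by decide)).real_of_rat_of_norm_eq_one h3 h1
  have h32 : LinearIndependent ℝ ![v₃, v₂] :=
    (hind.pair_of_ne (i := 2) (j := 1) (by decide)).real_of_rat_of_norm_eq_one h3 h2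
  obtain ⟨a, b, hab⟩ := exists_smul_add_smul_eq_of_finrank_eq_two finrank_euclideanSpace_fin h12 v₃
  have ha : a ≠ 0 := by
    rintro rfl
    exact (linearIndependent_fin2.1 h32).2 b (by simpa using hab)
  have hb : b ≠ 0 := by
    rintro rfl
    exact (linearIndependent_fin2.1 h31).2 a (by simpa using hab)
  exact inv_smul_add_inv_smul_add_inv_smul_eq_zero h1 h2 h3 hab ha hb
    (hγ ▸ real_inner_sq_ne_one_of_linearIndependent h1 h2 h12) hγ hα hβ
end

section
/- Every integer solution (x, y, z) with xyz ≠ 0 of the equation 1/x + 1/y + 1/z = 0 can be written as x = d·s·t, y = d·r·t, z = d·r·s for some nonzero integers d, r, s, t with r + s + t = 0. -/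
/-!
Clearing denominators gives `x*y + y*z + z*x = 0`. Let `k` generate the ideal
`(y*z, z*x)`, which also contains `x*y`, and write `y*z = k*r`, `z*x = k*s`, `x*y = k*t`;
then `k*(r + s + t) = 0`. Every product of two of `y*z, z*x, x*y` is a multiple of `x*y*z`
(e.g. `(y*z)^2 = -x*y*z*(y + z)`), hence so is `k^2 = x*y*z*d`. Now
`x*y*z*x = (z*x)*(x*y) = k^2*s*t = x*y*z*d*s*t`, so `x = d*s*t`, and likewise for `y`, `z`.
-/

theorem inv_add_inv_add_inv_eq_zero_iff {K : Type*} [Field K] {x y z : K}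
    (hx : x ≠ 0) (hy : y ≠ 0) (hz : z ≠ 0) :
    x⁻¹ + y⁻¹ + z⁻¹ = 0 ↔ x * y + y * z + z * x = 0 := by
  rw [show x⁻¹ + y⁻¹ + z⁻¹ = (x * y + y * z + z * x) / (x * y * z) by field_simp; ring]
  exact div_eq_zero_iff.trans (or_iff_left (by positivity))

section

variable {R : Type*} [CommRing R]

theorem mul_mul_dvd_sq_of_mem_span_pair {x y z k : R} (h : x * y + y * z + z * x = 0)
    (hk : k ∈ Ideal.span {y * z, z * x}) : x * y * z ∣ k ^ 2 := by
  obtain ⟨a, b, rfl⟩ := Ideal.mem_span_pair.1 hk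
  exact ⟨-a ^ 2 * (y + z) + 2 * a * b * z - b ^ 2 * (z + x),
    by linear_combination (a ^ 2 * (y * z) + b ^ 2 * (z * x)) * h⟩

theorem exists_eq_mul_mul_of_mul_add_mul_add_mul_eq_zero [IsDomain R]
    [IsPrincipalIdealRing R] {x y z : R} (hx : x ≠ 0) (hy : y ≠ 0) (hz : z ≠ 0)
    (h : x * y + y * z + z * x = 0) :
    ∃ d r s t : R, r + s + t = 0 ∧ x = d * s * t ∧ y = d * r * t ∧ z = d * r * s := by
  set I := Ideal.span {y * z, z * x}
  obtain ⟨k, hI⟩ := Submodule.IsPrincipal.principal I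
  have hdvd : ∀ {a}, a ∈ I → k ∣ a := fun ha =>
    Ideal.mem_span_singleton.1 (by rw [hI] at ha; exact ha)
  have hkI : k ∈ I := hI ▸ Submodule.mem_span_singleton_self k
  obtain ⟨r, hr⟩ := hdvd (Ideal.subset_span (by simp) : y * z ∈ I)
  obtain ⟨s, hs⟩ := hdvd (Ideal.subset_span (by simp) : z * x ∈ I)
  obtain ⟨t, ht⟩ : k ∣ x * y := by
    rw [show x * y = -(y * z) - z * x by linear_combination h]
    exact dvd_sub (dvd_neg.2 ⟨r, hr⟩) ⟨s, hs⟩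
  obtain ⟨d, hd⟩ := mul_mul_dvd_sq_of_mem_span_pair h hkI
  have hk : k ≠ 0 := by rintro hk; simp [hk, hy, hz] at hr
  have hxyz : x * y * z ≠ 0 := by simp [hx, hy, hz]
  refine ⟨d, r, s, t, ?_, ?_, ?_, ?_⟩
  · have hk_sum : k * (r + s + t) = 0 := by linear_combination h - hr - hs - ht
    exact (mul_eq_zero.1 hk_sum).resolve_left hk
  · exact mul_left_cancel₀ hxyz (by linear_combination (z * x) * ht + k * t * hs + (s * t) * hd)
  · exact mul_left_cancel₀ hxyz (by linear_combination (y * z) * ht + k * t * hr + (r * t) * hd)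
  · exact mul_left_cancel₀ hxyz (by linear_combination (y * z) * hs + k * s * hr + (r * s) * hd)

end

theorem stmt_14 (x y z : ℤ) (hx : x ≠ 0) (hy : y ≠ 0) (hz : z ≠ 0)
    (h : (x : ℚ)⁻¹ + (y : ℚ)⁻¹ + (z : ℚ)⁻¹ = 0) :
    ∃ d r s t : ℤ, d ≠ 0 ∧ r ≠ 0 ∧ s ≠ 0 ∧ t ≠ 0 ∧ r + s + t = 0 ∧
      x = d * s * t ∧ y = d * r * t ∧ z = d * r * s := by
  have hsum : x * y + y * z + z * x = 0 := by
    exact_mod_cast (inv_add_inv_add_inv_eq_zero_iff (K := ℚ) (by exact_mod_cast hx)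
      (by exact_mod_cast hy) (by exact_mod_cast hz)).1 h
  obtain ⟨d, r, s, t, hrst, rfl, rfl, rfl⟩ :=
    exists_eq_mul_mul_of_mul_add_mul_add_mul_eq_zero hx hy hz hsum
  simp only [ne_eq, mul_eq_zero, not_or] at hx hy
  exact ⟨d, r, s, t, hx.1.1, hy.1.2, hx.1.2, hx.2, hrst, rfl, rfl, rfl⟩
end

section
/- Let Q(x,y,z) = ‖x v1 + y v2 + z v3‖² where v1, v2, v3 ∈ ℝ² are linearly independent over ℚ. Then for any plane P ⊂ ℝ³ (a 2-dimensional affine subspace) and any constant c > 0, the set of integer triples (x,y,z) ∈ P ∩ ℤ³ with Q(x,y,z) = c is finite. -/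
/-!
Let `T p = ∑ pᵢ vᵢ` and let `D` be the direction of the plane `P`. If `T` is injective on `D`,
it is antilipschitz there, so the points of the plane that `T` sends to a circle form a bounded
set, which contains finitely many lattice points. Otherwise rank–nullity makes `T(P)` a line, which
meets a circle in at most two points (three points of a circle are never collinear), and `T` is
injective on `ℤ³` by the `ℚ`-independence of the `vᵢ`.
-/

open Bornology Function Module EuclideanGeometry

theorem AffineSubspace.isBounded_inter_preimage_of_ker_domRestrict_eq_bot {E F : Type*}
    [NormedAddCommGroup E] [NormedSpace ℝ E] [FiniteDimensional ℝ E]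
    [NormedAddCommGroup F] [NormedSpace ℝ F] {T : E →ₗ[ℝ] F} {A : AffineSubspace ℝ E}
    (hT : LinearMap.ker (T.domRestrict A.direction) = ⊥)
    {B : Set F} (hB : IsBounded B) : IsBounded ((A : Set E) ∩ T ⁻¹' B) := by
  obtain ⟨K, -, hK⟩ := (T.domRestrict A.direction).exists_antilipschitzWith hT
  obtain ⟨C, hC⟩ := Metric.isBounded_iff.mp hB
  refine Metric.isBounded_iff.mpr ⟨K * C, fun p hp q hq => ?_⟩
  have hpq : p - q ∈ A.direction := A.vsub_mem_direction hp.1 hq.1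
  calc dist p q = dist (⟨p - q, hpq⟩ : A.direction) 0 := by simp [dist_eq_norm]
    _ ≤ K * dist (T.domRestrict A.direction ⟨p - q, hpq⟩) (T.domRestrict A.direction 0) :=
      hK.le_mul_dist _ _
    _ = K * dist (T p) (T q) := by simp [dist_eq_norm]
    _ ≤ K * C := by gcongr; exact hC hp.2 hq.2

theorem AffineSubspace.collinear_image_of_ker_domRestrict_ne_bot {k E F : Type*} [DivisionRing k]
    [AddCommGroup E] [Module k E] [FiniteDimensional k E] [AddCommGroup F] [Module k F]
    {T : E →ₗ[k] F} {A : AffineSubspace k E} (hA : finrank k A.direction ≤ 2)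
    (hT : LinearMap.ker (T.domRestrict A.direction) ≠ ⊥) : Collinear k (T '' A) := by
  have hker : finrank k (LinearMap.ker (T.domRestrict A.direction)) ≠ 0 :=
    mt Submodule.finrank_eq_zero.mp hT
  have hrange := (T.domRestrict A.direction).finrank_range_add_finrank_ker
  have hspan : vectorSpan k (T '' A) = A.direction.map T := by
    rw [A.direction_eq_vectorSpan, ← T.coe_toAffineMap, ← AffineMap.map_vectorSpan]
    rfl
  rw [Collinear, hspan, ← LinearMap.range_domRestrict, ← finrank_eq_rank]
  exact_mod_cast (by omega : finrank k (LinearMap.range (T.domRestrict A.direction)) ≤ 1)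

theorem Collinear.finite_of_cospherical {V P : Type*} [NormedAddCommGroup V]
    [InnerProductSpace ℝ V] [MetricSpace P] [NormedAddTorsor V P] {s : Set P} (hcol : Collinear ℝ s)
    (hsph : Cospherical s) : s.Finite := by
  classical
  by_contra hinf
  obtain ⟨t, hts, ht⟩ := Set.Infinite.exists_subset_card_eq hinf 3
  obtain ⟨x, y, z, hxy, hxz, hyz, rfl⟩ := Finset.card_eq_three.mp ht
  clear ht
  simp only [Finset.coe_insert, Finset.coe_singleton, Set.insert_subset_iff,
    Set.singleton_subset_iff] at hts
  obtain ⟨hx, hy, hz⟩ := hts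
  exact affineIndependent_iff_not_collinear_set.mp
    (hsph.affineIndependent_of_mem_of_ne hx hy hz hxy hxz hyz)
    (hcol.subset (by simp [Set.insert_subset_iff, hx, hy, hz]))

theorem pi_norm_intCast {ι : Type*} [Fintype ι] (n : ι → ℤ) : ‖fun i => (n i : ℝ)‖ = ‖n‖ := by
  simp only [Pi.norm_def]
  congr 2

theorem finite_setOf_intCast_mem {ι : Type*} [Fintype ι] {B : Set (ι → ℝ)} (hB : IsBounded B) :
    {n : ι → ℤ | (fun i => (n i : ℝ)) ∈ B}.Finite := by
  obtain ⟨R, hR⟩ := hB.subset_closedBall 0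
  refine (isCompact_closedBall (0 : ι → ℤ) R).finite_of_discrete.subset fun n hn => ?_
  simpa [pi_norm_intCast] using hR hn

theorem LinearIndependent.injective_linearCombination_intCast {ι F : Type*} [Fintype ι]
    [AddCommGroup F] [Module ℝ F] [Module ℚ F] {v : ι → F} (hv : LinearIndependent ℚ v) :
    Injective fun n : ι → ℤ => Fintype.linearCombination ℝ v fun i => (n i : ℝ) := by
  intro m n h
  apply linearIndependent_iff_injective_fintypeLinearCombination.mp (hv.restrict_scalars' ℤ)
  simpa [Fintype.linearCombination_apply, Int.cast_smul_eq_zsmul] using h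

theorem AffineSubspace.finite_setOf_intCast_mem_and_norm_linearCombination_eq {ι F : Type*}
    [Fintype ι] [NormedAddCommGroup F] [InnerProductSpace ℝ F] [Module ℚ F] {v : ι → F}
    (hv : LinearIndependent ℚ v) {A : AffineSubspace ℝ (ι → ℝ)} (hA : finrank ℝ A.direction ≤ 2)
    (r : ℝ) :
    {n : ι → ℤ | (fun i => (n i : ℝ)) ∈ A ∧
      ‖Fintype.linearCombination ℝ v fun i => (n i : ℝ)‖ = r}.Finite := by
  set T := Fintype.linearCombination ℝ v
  by_cases hT : LinearMap.ker (T.domRestrict A.direction) = ⊥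
  · refine (finite_setOf_intCast_mem (A.isBounded_inter_preimage_of_ker_domRestrict_eq_bot hT
      (Metric.isBounded_sphere (x := (0 : F)) (r := r)))).subset
        fun n hn => ⟨hn.1, by simpa using hn.2⟩
  · have hfin : ((T '' A) ∩ Metric.sphere 0 r).Finite :=
      ((A.collinear_image_of_ker_domRestrict_ne_bot hA hT).subset
        Set.inter_subset_left).finite_of_cospherical ⟨0, r, fun p hp => by simpa using hp.2⟩
    exact (hfin.preimage hv.injective_linearCombination_intCast.injOn).subset
      fun n hn => ⟨⟨_, hn.1, rfl⟩, by simpa using hn.2⟩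

theorem stmt_18_general (v₁ v₂ v₃ : EuclideanSpace ℝ (Fin 2))
    (hind : LinearIndependent ℚ ![v₁, v₂, v₃])
    (P : AffineSubspace ℝ (Fin 3 → ℝ)) (hP : Module.finrank ℝ P.direction = 2)
    (c : ℝ) :
    {t : ℤ × ℤ × ℤ |
      (![(t.1 : ℝ), (t.2.1 : ℝ), (t.2.2 : ℝ)] : Fin 3 → ℝ) ∈ P ∧
        ‖(t.1 : ℝ) • v₁ + (t.2.1 : ℝ) • v₂ + (t.2.2 : ℝ) • v₃‖ ^ 2 = c}.Finite := by
  have htriple : Injective fun t : ℤ × ℤ × ℤ => ![t.1, t.2.1, t.2.2] := fun s t h =>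
    Prod.ext (congr_fun h 0) (Prod.ext (congr_fun h 1) (congr_fun h 2))
  have hcast (t : ℤ × ℤ × ℤ) :
      (fun i => ((![t.1, t.2.1, t.2.2] i : ℤ) : ℝ)) = ![(t.1 : ℝ), t.2.1, t.2.2] := by
    funext i; fin_cases i <;> rfl
  refine ((P.finite_setOf_intCast_mem_and_norm_linearCombination_eq hind hP.le √c).preimage
    htriple.injOn).subset fun t ⟨htP, htc⟩ => ⟨?_, ?_⟩
  · simpa [hcast] using htP
  · simp [hcast, Fintype.linearCombination_apply, Fin.sum_univ_three, ← htc]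

theorem stmt_18 (v₁ v₂ v₃ : EuclideanSpace ℝ (Fin 2))
    (hind : LinearIndependent ℚ ![v₁, v₂, v₃])
    (P : AffineSubspace ℝ (Fin 3 → ℝ)) (hP : Module.finrank ℝ P.direction = 2)
    (c : ℝ) (hc : 0 < c) :
    {t : ℤ × ℤ × ℤ |
      (![(t.1 : ℝ), (t.2.1 : ℝ), (t.2.2 : ℝ)] : Fin 3 → ℝ) ∈ P ∧
        ‖(t.1 : ℝ) • v₁ + (t.2.1 : ℝ) • v₂ + (t.2.2 : ℝ) • v₃‖ ^ 2 = c}.Finite :=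
  stmt_18_general v₁ v₂ v₃ hind P hP c
end
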